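/- arXiv:1005.0307 — 5 statements merged into one kernel-verified Lean document; each statement's English description precedes it below -/
import Mathlib

section
/- For every infinite cardinal m, every weakly initially m-compact topological space is pseudo-(κ,κ)-compact for every infinite cardinal κ ≤ m. -/
open Cardinal Topology

universe u

/-- A topological space is weakly initially `m`-compact if every open cover of
cardinality `≤ m` has a finite subfamily whose union is dense. -/
def WeaklyInitiallyCompact (m : Cardinal.{u}) (X : Type u) [TopologicalSpace X] : Prop :=
  ∀ (ι : Type u) (O : ι → Set X), #ι ≤ m → (∀ i, IsOpen (O i)) →
    (⋃ i, O i) = Set.univ → ∃ s : Finset ι, Dense (⋃ i ∈ s, O i)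

/-- `X` is pseudo-(κ,ν)-compact if every ν-indexed sequence of nonempty open sets
has a point each of whose neighborhoods meets `≥ κ` many of the sets. -/
def PseudoCompact (κ ν : Cardinal.{u}) (X : Type u) [TopologicalSpace X] : Prop :=
  ∀ O : ν.out → Set X, (∀ i, IsOpen (O i)) → (∀ i, (O i).Nonempty) →
    ∃ x : X, ∀ U ∈ 𝓝 x, κ ≤ #{i : ν.out // (U ∩ O i).Nonempty}

theorem weaklyInitiallyCompact_pseudoCompact (m : Cardinal.{u}) (hm : ℵ₀ ≤ m)
    (X : Type u) [TopologicalSpace X] (hX : WeaklyInitiallyCompact m X)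
    (κ : Cardinal.{u}) (hκ : ℵ₀ ≤ κ) (hκm : κ ≤ m) :
    PseudoCompact κ κ X := by
  intro O hopen hne
  by_contra hcon
  push_neg at hcon
  have hmkι : #(Quotient.out κ) = κ := Cardinal.mk_out κ
  haveI : Infinite (Quotient.out κ) := Cardinal.infinite_iff.mpr (by rw [hmkι]; exact hκ)
  have hfin : #(Finset (Quotient.out κ)) = #(Quotient.out κ) :=
    Cardinal.mk_finset_of_infinite (Quotient.out κ)
  obtain ⟨σ⟩ := Cardinal.eq.mp hfin
  set Y : (Quotient.out κ) → Set X := fun a => ⋃ (s : Finset (Quotient.out κ)) (_ : a ∈ s), O (σ s) with hY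
  set V : (Quotient.out κ) → Set X := fun a => (closure (Y a))ᶜ with hV
  have hVopen : ∀ a, IsOpen (V a) := fun a => isOpen_compl_iff.mpr isClosed_closure
  have hVcover : (⋃ a, V a) = Set.univ := by
    apply Set.eq_univ_of_forall
    intro x
    obtain ⟨U, hU, hcard⟩ := hcon x
    set S : Set (Quotient.out κ) := {i | (U ∩ O i).Nonempty} with hS
    have hScard : #S < κ := hcard
    set W : Set (Quotient.out κ) := ⋃ i ∈ S, ((σ.symm i : Finset (Quotient.out κ)) : Set (Quotient.out κ)) with hW
    have hWcard : #W < κ := by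
      by_cases hκω : ℵ₀ < κ
      · have h1 : #W ≤ #S * ℵ₀ := by
          rw [hW, Set.biUnion_eq_iUnion]
          calc #(⋃ (i : S), ((σ.symm i : Finset (Quotient.out κ)) : Set (Quotient.out κ)))
              ≤ Cardinal.sum (fun i : S => #((σ.symm i : Finset (Quotient.out κ)) : Set (Quotient.out κ))) :=
                Cardinal.mk_iUnion_le_sum_mk
            _ ≤ Cardinal.sum (fun _ : S => ℵ₀) := by
                apply Cardinal.sum_le_sum
                intro i
                rw [Cardinal.mk_le_aleph0_iff, Set.countable_coe_iff]
                exact ((σ.symm i : Finset (Quotient.out κ)).finite_toSet).countable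
            _ = #S * ℵ₀ := Cardinal.sum_const' _ _
        exact lt_of_le_of_lt h1 (Cardinal.mul_lt_of_lt hκ hScard hκω)
      · have hκeq : κ = ℵ₀ := le_antisymm (not_lt.mp hκω) hκ
        have hSfin : S.Finite :=
          Cardinal.lt_aleph0_iff_set_finite.mp (lt_of_lt_of_le hScard (le_of_eq hκeq))
        have hWfin : W.Finite := hSfin.biUnion (fun i _ => (σ.symm i).finite_toSet)
        exact lt_of_lt_of_le (Cardinal.lt_aleph0_iff_set_finite.mpr hWfin)
          (le_of_eq hκeq.symm)
    have hex : ∃ a, a ∉ W := by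
      by_contra h
      push_neg at h
      have huniv : W = Set.univ := Set.eq_univ_of_forall h
      rw [huniv, Cardinal.mk_univ, hmkι] at hWcard
      exact lt_irrefl _ hWcard
    obtain ⟨a, haW⟩ := hex
    refine Set.mem_iUnion.mpr ⟨a, ?_⟩
    rw [hV]
    simp only [Set.mem_compl_iff]
    intro hxcl
    rw [mem_closure_iff_nhds] at hxcl
    obtain ⟨z, hzU, hzY⟩ := hxcl U hU
    rw [hY] at hzY
    rw [Set.mem_iUnion₂] at hzY
    obtain ⟨t, hat, hzO⟩ := hzY
    have hts : σ t ∈ S := ⟨z, hzU, hzO⟩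
    have : a ∈ W := by
      apply Set.mem_biUnion hts
      rw [Equiv.symm_apply_apply]
      exact Finset.mem_coe.mpr hat
    exact haW this
  obtain ⟨s, hs⟩ := hX (Quotient.out κ) V (by rw [hmkι]; exact hκm) hVopen hVcover
  obtain ⟨z, hzO, hzV⟩ := hs.inter_open_nonempty (O (σ s)) (hopen _) (hne _)
  rw [Set.mem_iUnion₂] at hzV
  obtain ⟨a, has, hz⟩ := hzV
  exact hz (subset_closure (Set.mem_iUnion₂.mpr ⟨s, has, hzO⟩))
end

section
/- Suppose κ ≥ λ ≥ μ are infinite cardinals and either κ > λ or κ is regular. Then every weakly [μ,κ]-compact topological space is pseudo-(κ, COV(κ,λ,μ))-compact. -/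
open Cardinal Topology

universe u

/-- A topological space is weakly `[μ,κ]`-compact if every open cover of cardinality
`≤ κ` has a subfamily of cardinality `< μ` whose union is dense. -/
def WeaklyCompactIn (μ κ : Cardinal.{u}) (X : Type u) [TopologicalSpace X] : Prop :=
  ∀ (ι : Type u) (O : ι → Set X), #ι ≤ κ → (∀ i, IsOpen (O i)) →
    (⋃ i, O i) = Set.univ → ∃ s : Set ι, #s < μ ∧ Dense (⋃ i ∈ s, O i)

/-- `COV(κ,λ,μ)`: the minimal cardinality of a family of subsets of `κ`, each of
cardinality `< λ`, such that every subset of `κ` of cardinality `< μ` is contained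
in some member of the family. -/
noncomputable def Cov (κ lam μ : Cardinal.{u}) : Cardinal.{u} :=
  sInf { c | ∃ K : Set (Set κ.out), #K = c ∧ (∀ A ∈ K, #A < lam) ∧
    ∀ W : Set κ.out, #W < μ → ∃ A ∈ K, W ⊆ A }

theorem weaklyCompactIn_pseudoCompact (κ lam μ : Cardinal.{u})
    (hμ : ℵ₀ ≤ μ) (h_mu_lam : μ ≤ lam) (h_lam_kappa : lam ≤ κ)
    (h : lam < κ ∨ κ.IsRegular)
    (X : Type u) [TopologicalSpace X] (hX : WeaklyCompactIn μ κ X) :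
    PseudoCompact κ (Cov κ lam μ) X := by
  intro O hOopen hOne
  by_contra hcon
  push_neg at hcon
  have hκ : ℵ₀ ≤ κ := hμ.trans (h_mu_lam.trans h_lam_kappa)
  -- obtain a covering family realizing Cov
  have hne : { c | ∃ K : Set (Set κ.out), #K = c ∧ (∀ A ∈ K, #A < lam) ∧
      ∀ W : Set κ.out, #W < μ → ∃ A ∈ K, W ⊆ A }.Nonempty :=
    ⟨#{A : Set κ.out | #A < lam}, {A | #A < lam}, rfl, fun A hA => hA,
      fun W hW => ⟨W, hW.trans_le h_mu_lam, subset_rfl⟩⟩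
  have hmem := csInf_mem hne
  obtain ⟨K, hK1, hK2, hK3⟩ := hmem
  have hcard : #((Cov κ lam μ).out) = #↥K := by rw [Cardinal.mk_out]; exact hK1.symm
  obtain ⟨e⟩ := Cardinal.eq.mp hcard
  set P : κ.out → Set X := fun α =>
    ⋃ (i : (Cov κ lam μ).out) (_ : α ∈ (e i : Set κ.out)), O i with hP
  set V : κ.out → Set X := fun α => (closure (P α))ᶜ with hV
  have hVopen : ∀ α, IsOpen (V α) := fun α => isClosed_closure.isOpen_compl
  have hVcover : (⋃ α, V α) = Set.univ := by
    rw [Set.eq_univ_iff_forall]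
    intro x
    obtain ⟨U, hU, hUcard⟩ := hcon x
    set T : Set κ.out :=
      ⋃ i : {i : (Cov κ lam μ).out // (U ∩ O i).Nonempty}, (e i.1 : Set κ.out) with hT
    have hTlt : #T < κ := by
      refine lt_of_le_of_lt Cardinal.mk_iUnion_le_sum_mk ?_
      rcases h with h | h
      · refine lt_of_le_of_lt (Cardinal.sum_le_sum _ (fun _ => lam)
          (fun i => ((hK2 _ (e i.1).2).le))) ?_
        rw [Cardinal.sum_const']
        exact Cardinal.mul_lt_of_lt hκ hUcard h
      · exact Cardinal.sum_lt_of_isRegular h hUcard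
          (fun i => lt_of_lt_of_le (hK2 _ (e i.1).2) h_lam_kappa)
    have hTne : T ≠ Set.univ := by
      intro hh
      rw [hh, Cardinal.mk_univ, Cardinal.mk_out] at hTlt
      exact lt_irrefl _ hTlt
    obtain ⟨α, hα⟩ := Set.ne_univ_iff_exists_notMem T |>.mp hTne
    refine Set.mem_iUnion.mpr ⟨α, ?_⟩
    intro hmemcl
    have hdisj : interior U ∩ P α = ∅ := by
      ext y
      simp only [Set.mem_inter_iff, Set.mem_empty_iff_false, iff_false]
      rintro ⟨hyU, hyP⟩
      obtain ⟨i, hiα, hyO⟩ := by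
        simpa only [hP, Set.mem_iUnion] using hyP
      have : (U ∩ O i).Nonempty := ⟨y, interior_subset hyU, hyO⟩
      exact hα (Set.mem_iUnion.mpr ⟨⟨i, this⟩, hiα⟩)
    have hxint : x ∈ interior U := mem_interior_iff_mem_nhds.mpr hU
    have := (mem_closure_iff.mp (by simpa using hmemcl)) (interior U)
      isOpen_interior hxint
    rw [hdisj] at this
    exact this.ne_empty rfl
  obtain ⟨s, hslt, hsdense⟩ := hX κ.out V (Cardinal.mk_out κ).le hVopen hVcover
  obtain ⟨A, hA, hsA⟩ := hK3 s hslt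
  set i₀ := e.symm ⟨A, hA⟩ with hi₀
  obtain ⟨y, hys, hyO⟩ := hsdense.exists_mem_open (hOopen i₀) (hOne i₀)
  obtain ⟨α, hαs, hyV⟩ := by simpa only [Set.mem_iUnion] using hys
  have hαA : α ∈ (e i₀ : Set κ.out) := by
    rw [hi₀, Equiv.apply_symm_apply]
    exact hsA hαs
  have : y ∈ P α := Set.mem_iUnion.mpr ⟨i₀, Set.mem_iUnion.mpr ⟨hαA, hyO⟩⟩
  exact hyV (subset_closure this)
end

section
/- Suppose κ ≥ λ ≥ μ are infinite cardinals, either κ > λ or κ is regular, and let ν = COV(κ,λ,μ). If X is a [μ,κ]-compact topological space, then for every ν-indexed family (x_β)_{β<ν} of points of X, there is x ∈ X such that for every neighborhood U of x, the set {β < ν : x_β ∈ U} has cardinality ≥ κ. -/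
open Cardinal Topology

universe u

/-- `X` is `[μ,κ]`-compact: every κ-indexed family of closed sets, all of whose
subfamilies of size `< μ` have nonempty intersection, has nonempty intersection. -/
def CompactIn (μ κ : Cardinal.{u}) (X : Type u) [TopologicalSpace X] : Prop :=
  ∀ C : κ.out → Set X, (∀ α, IsClosed (C α)) →
    (∀ Z : Set κ.out, #Z < μ → (⋂ α ∈ Z, C α).Nonempty) →
    (⋂ α, C α).Nonempty

theorem compactIn_accumulation (κ lam μ : Cardinal.{u})
    (hμ : ℵ₀ ≤ μ) (h_mu_lam : μ ≤ lam) (h_lam_kappa : lam ≤ κ)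
    (h : lam < κ ∨ κ.IsRegular)
    (X : Type u) [TopologicalSpace X] (hX : CompactIn μ κ X)
    (f : (Cov κ lam μ).out → X) :
    ∃ x : X, ∀ U ∈ 𝓝 x, κ ≤ #{β : (Cov κ lam μ).out // f β ∈ U} := by
  have hκ : ℵ₀ ≤ κ := hμ.trans (h_mu_lam.trans h_lam_kappa)
  -- The set defining Cov is nonempty, so the infimum is attained.
  have hne : { c | ∃ K : Set (Set κ.out), #K = c ∧ (∀ A ∈ K, #A < lam) ∧
      ∀ W : Set κ.out, #W < μ → ∃ A ∈ K, W ⊆ A }.Nonempty := by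
    refine ⟨#{A : Set κ.out | #A < lam}, {A : Set κ.out | #A < lam}, rfl,
      fun A hA => hA, fun W hW => ⟨W, hW.trans_le h_mu_lam, subset_rfl⟩⟩
  obtain ⟨K, hKcard, hKsmall, hKcov⟩ := csInf_mem hne
  -- An equivalence between the index type and the covering family.
  have hmk : #((Cov κ lam μ).out) = #(↥K) := by rw [mk_out, Cov]; exact hKcard.symm
  obtain ⟨e⟩ := Cardinal.eq.mp hmk
  set g : ↥K → X := fun A => f (e.symm A) with hg
  -- The κ-indexed family of closed sets.
  set C : κ.out → Set X := fun α => closure (g '' {A : ↥K | α ∈ (A : Set κ.out)}) with hC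
  have hclosed : ∀ α, IsClosed (C α) := fun α => isClosed_closure
  have hfip : ∀ Z : Set κ.out, #Z < μ → (⋂ α ∈ Z, C α).Nonempty := by
    intro Z hZ
    obtain ⟨A, hAK, hZA⟩ := hKcov Z hZ
    refine ⟨g ⟨A, hAK⟩, Set.mem_iInter₂.mpr fun α hα => subset_closure ?_⟩
    exact ⟨⟨A, hAK⟩, hZA hα, rfl⟩
  obtain ⟨x, hx⟩ := hX C hclosed hfip
  refine ⟨x, fun U hU => ?_⟩
  by_contra hlt
  push_neg at hlt
  -- The set of indices landing in U is small; so is the corresponding subfamily of K.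
  set B : Set (↥K) := {A | g A ∈ U} with hB
  have hBcard : #(↥B) < κ := by
    refine lt_of_le_of_lt ?_ hlt
    exact Cardinal.mk_le_of_injective (f := fun A : ↥B => (⟨e.symm A.1, A.2⟩ :
      {β : (Cov κ lam μ).out // f β ∈ U}))
      (fun a b hab => Subtype.ext (e.symm.injective (congrArg Subtype.val hab)))
  -- The union of the sets in B is small.
  have hiSup : (⨆ A : ↥B, #((A.1 : Set κ.out))) < κ := by
    rcases h with hlk | hreg
    · rcases isEmpty_or_nonempty (↥B) with hE | hNE
      · simp only [ciSup_of_empty]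
        exact hκ.trans_lt' (by simpa using aleph0_pos)
      · exact lt_of_le_of_lt (ciSup_le' fun A => (hKsmall _ A.1.2).le) hlk
    · exact Cardinal.iSup_lt_of_isRegular hreg hBcard
        (fun A => (hKsmall _ A.1.2).trans_le h_lam_kappa)
  have hUnion : #(⋃ A : ↥B, (A.1 : Set κ.out)) < κ := by
    refine lt_of_le_of_lt (Cardinal.mk_iUnion_le _) ?_
    exact Cardinal.mul_lt_of_lt hκ hBcard hiSup
  -- Pick an index outside the union.
  have hne' : ((⋃ A : ↥B, (A.1 : Set κ.out))ᶜ).Nonempty := by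
    rw [Set.nonempty_compl]
    intro huniv
    rw [huniv] at hUnion
    exact absurd (by rw [mk_univ, mk_out]) hUnion.ne
  obtain ⟨α, hα⟩ := hne'
  -- x lies in the closure C α, so U meets {g A : α ∈ A}.
  have hxα : x ∈ C α := Set.mem_iInter.mp hx α
  obtain ⟨y, hyU, A, hαA, rfl⟩ :=
    mem_closure_iff_nhds.mp hxα U hU
  exact hα (Set.mem_iUnion.mpr ⟨⟨A, hyU⟩, hαA⟩)
end

section
/- Suppose κ ≥ λ ≥ μ are infinite cardinals, either κ > λ or κ is regular, and let ν = COV(κ,λ,μ). Let X be a topological space and F a family of subsets of X. If X is F-[μ,κ]-compact, then for every ν-indexed family (F_β)_{β<ν} of elements of F, there is x ∈ X such that for every neighborhood U of x, the set {β < ν : F_β ∩ U ≠ ∅} has cardinality ≥ κ. -/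
open Cardinal Topology

universe u

/-- `X` is `𝓕`-`[μ,κ]`-compact: for every κ-indexed family of closed sets such that
the intersection of every subfamily of size `< μ` contains some member of `𝓕`,
the whole intersection is nonempty. -/
def FCompactIn (X : Type u) [TopologicalSpace X] (𝓕 : Set (Set X))
    (μ κ : Cardinal.{u}) : Prop :=
  ∀ C : κ.out → Set X, (∀ α, IsClosed (C α)) →
    (∀ Z : Set κ.out, #Z < μ → ∃ F ∈ 𝓕, F ⊆ ⋂ α ∈ Z, C α) →
    (⋂ α, C α) ≠ ∅

theorem fCompactIn_accumulation (κ lam μ : Cardinal.{u})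
    (hμ : ℵ₀ ≤ μ) (h_mu_lam : μ ≤ lam) (h_lam_kappa : lam ≤ κ)
    (h : lam < κ ∨ κ.IsRegular)
    (X : Type u) [TopologicalSpace X] (𝓕 : Set (Set X))
    (hX : FCompactIn X 𝓕 μ κ)
    (G : (Cov κ lam μ).out → Set X) (hG : ∀ β, G β ∈ 𝓕) :
    ∃ x : X, ∀ U ∈ 𝓝 x,
      κ ≤ #{β : (Cov κ lam μ).out // (G β ∩ U).Nonempty} := by
  classical
  -- a witnessing covering family
  have hne : { c | ∃ K : Set (Set κ.out), #K = c ∧ (∀ A ∈ K, #A < lam) ∧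
      ∀ W : Set κ.out, #W < μ → ∃ A ∈ K, W ⊆ A }.Nonempty := by
    refine ⟨#{A : Set κ.out | #A < lam}, {A : Set κ.out | #A < lam}, rfl,
      fun A hA => hA, fun W hW => ⟨W, lt_of_lt_of_le hW h_mu_lam, subset_rfl⟩⟩
  obtain ⟨K, hKcard, hKsmall, hKcov⟩ := csInf_mem hne
  have hcard : #((Cov κ lam μ).out) = #K := (Cardinal.mk_out _).trans hKcard.symm
  obtain ⟨e⟩ := Cardinal.eq.mp hcard
  set E : (Cov κ lam μ).out → Set κ.out := fun β => (e β : Set κ.out) with hE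
  have hEcov : ∀ W : Set κ.out, #W < μ → ∃ β, W ⊆ E β := by
    intro W hW
    obtain ⟨A, hA, hWA⟩ := hKcov W hW
    refine ⟨e.symm ⟨A, hA⟩, ?_⟩
    simpa [hE, e.apply_symm_apply] using hWA
  have hEsmall : ∀ β, #(E β) < lam := fun β => hKsmall _ (e β).2
  -- the closed sets
  set C : κ.out → Set X := fun α => closure (⋃ β ∈ {β | α ∈ E β}, G β) with hC
  have hCsub : ∀ α β, α ∈ E β → G β ⊆ C α := by
    intro α β hαβ
    have h1 : G β ⊆ ⋃ β ∈ {β | α ∈ E β}, G β :=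
      Set.subset_biUnion_of_mem (u := G) hαβ
    exact h1.trans (subset_closure)
  have hnonempty : (⋂ α, C α).Nonempty := by
    rw [Set.nonempty_iff_ne_empty]
    refine hX C (fun α => isClosed_closure) ?_
    intro Z hZ
    obtain ⟨β, hβ⟩ := hEcov Z hZ
    exact ⟨G β, hG β, Set.subset_iInter₂ fun α hα => hCsub α β (hβ hα)⟩
  obtain ⟨x, hx⟩ := hnonempty
  refine ⟨x, fun U hU => ?_⟩
  obtain ⟨V, hVU, hVopen, hxV⟩ := mem_nhds_iff.mp hU
  -- choice of witnesses
  have key : ∀ α : κ.out, ∃ β, α ∈ E β ∧ (G β ∩ U).Nonempty := by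
    intro α
    have hxC : x ∈ C α := Set.mem_iInter.mp hx α
    obtain ⟨y, hyV, hyU⟩ := mem_closure_iff.mp hxC V hVopen hxV
    obtain ⟨β, hβ, hyG⟩ := Set.mem_iUnion₂.mp hyU
    exact ⟨β, hβ, ⟨y, hyG, hVU hyV⟩⟩
  choose f hf1 hf2 using key
  set S := {β : (Cov κ lam μ).out // (G β ∩ U).Nonempty} with hS
  -- surjection from sigma type onto κ.out
  have hsurj : Function.Surjective
      (fun p : Σ β : S, (E β.1 : Set κ.out) => (p.2 : κ.out)) := by
    intro α
    exact ⟨⟨⟨f α, hf2 α⟩, ⟨α, hf1 α⟩⟩, rfl⟩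
  have hκle : κ ≤ Cardinal.sum (fun β : S => #(E β.1)) := by
    have := Cardinal.mk_le_of_surjective hsurj
    rw [Cardinal.mk_sigma] at this
    calc κ = #(κ.out) := (Cardinal.mk_out κ).symm
      _ ≤ _ := this
  by_contra hlt
  have hSlt : #S < κ := lt_of_not_ge hlt
  have hκinf : ℵ₀ ≤ κ := hμ.trans (h_mu_lam.trans h_lam_kappa)
  rcases h with hlk | hreg
  · -- lam < κ
    have : Cardinal.sum (fun β : S => #(E β.1)) ≤ #S * lam := by
      calc Cardinal.sum (fun β : S => #(E β.1))
          ≤ Cardinal.sum (fun _ : S => lam) :=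
            Cardinal.sum_le_sum _ _ (fun β => (hEsmall β.1).le)
        _ = #S * lam := Cardinal.sum_const' _ _
    have : κ < κ := lt_of_le_of_lt (hκle.trans this)
      (Cardinal.mul_lt_of_lt hκinf hSlt hlk)
    exact absurd this (lt_irrefl κ)
  · -- κ regular
    have : Cardinal.sum (fun β : S => #(E β.1)) < κ :=
      Cardinal.sum_lt_of_isRegular hreg hSlt
        (fun β => lt_of_lt_of_le (hEsmall β.1) h_lam_kappa)
    exact absurd (lt_of_le_of_lt hκle this) (lt_irrefl κ)
end

section
/- Let κ be an infinite cardinal, X a topological space, and (O_F)_{F ∈ S_ω(κ)} a family of open sets indexed by the finite subsets of κ. For α < κ let C_α be the closure of ⋃{O_F : α ∈ F}. If x ∈ ⋂_{α<κ} C_α and U is a neighborhood of x, then the set {F ∈ S_ω(κ) : U ∩ O_F ≠ ∅} has cardinality κ. -/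
open Cardinal Topology

universe u

theorem mem_iInter_closure_accumulation (κ : Cardinal.{u}) (hκ : ℵ₀ ≤ κ)
    (X : Type u) [TopologicalSpace X]
    (O : Finset κ.out → Set X) (hO : ∀ F, IsOpen (O F))
    (x : X)
    (hx : x ∈ ⋂ α : κ.out,
      closure (⋃ F ∈ {F : Finset κ.out | α ∈ F}, O F))
    (U : Set X) (hU : U ∈ 𝓝 x) :
    #{F : Finset κ.out // (U ∩ O F).Nonempty} = κ := by
  haveI : Infinite κ.out := by
    rw [Cardinal.infinite_iff, Cardinal.mk_out]; exact hκ
  set S := {F : Finset κ.out // (U ∩ O F).Nonempty} with hS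
  -- for each α, find F ∈ S with α ∈ F
  have key : ∀ α : κ.out, ∃ s : S, α ∈ s.1 := by
    intro α
    have h1 := Set.mem_iInter.mp hx α
    have h2 := (mem_closure_iff_nhds.mp h1) U hU
    obtain ⟨y, hyU, hy⟩ := h2
    simp only [Set.mem_iUnion] at hy
    obtain ⟨F, hαF, hyF⟩ := hy
    exact ⟨⟨F, ⟨y, hyU, hyF⟩⟩, hαF⟩
  choose g hg using key
  -- fibers of g are finite
  have hle : #κ.out ≤ #S * ℵ₀ := by
    apply Cardinal.mk_le_mk_mul_of_mk_preimage_le g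
    intro s
    have hsub : g ⁻¹' {s} ⊆ (↑s.1 : Set κ.out) := by
      intro α hα
      have : g α = s := hα
      rw [← this]; exact hg α
    calc #(g ⁻¹' {s}) ≤ #(↑s.1 : Set κ.out) := Cardinal.mk_le_mk_of_subset hsub
      _ ≤ ℵ₀ := le_of_lt (s.1.finite_toSet.lt_aleph0)
  -- S is infinite
  haveI : Infinite S := by
    by_contra hfin
    rw [not_infinite_iff_finite] at hfin
    have hcov : (Set.univ : Set κ.out) ⊆ ⋃ s : S, (↑s.1 : Set κ.out) := by
      intro α _
      exact Set.mem_iUnion.mpr ⟨g α, hg α⟩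
    have : (Set.univ : Set κ.out).Finite :=
      Set.Finite.subset (Set.finite_iUnion fun s => s.1.finite_toSet) hcov
    exact Set.infinite_univ this
  have hS0 : ℵ₀ ≤ #S := Cardinal.infinite_iff.mp ‹Infinite S›
  have h1 : κ ≤ #S := by
    have := hle
    rw [Cardinal.mk_out, Cardinal.mul_aleph0_eq hS0] at this
    exact this
  have h2 : #S ≤ κ := by
    calc #S ≤ #(Finset κ.out) := Cardinal.mk_subtype_le _
      _ = #κ.out := Cardinal.mk_finset_of_infinite _
      _ = κ := Cardinal.mk_out κ
  exact le_antisymm h2 h1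
end
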